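/- For all integers n and k with n ≥ 2k+1 and k ≥ 1, the treewidth of the bipartite Kneser graph satisfies tw(BK(n,k)) ≤ C(n,k) − 1. -/

import Mathlib

/-- A tree decomposition of a graph `G` over a tree `T`: bags cover all vertices and all
edges, and for each vertex the set of nodes whose bags contain it induces a connected
(hence subtree) part of `T`. -/
structure TreeDecomp {V : Type*} {ι : Type} (G : SimpleGraph V) (T : SimpleGraph ι) where
  bag : ι → Finset V
  cover : ∀ v : V, ∃ i, v ∈ bag i
  edgeCover : ∀ u v : V, G.Adj u v → ∃ i, u ∈ bag i ∧ v ∈ bag i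
  subtree : ∀ v : V, (T.induce {i : ι | v ∈ bag i}).Connected

/-- The treewidth of a finite graph: the minimum over all tree decompositions of
(maximum bag size − 1). -/
noncomputable def treewidth {V : Type*} [Fintype V] (G : SimpleGraph V) : ℕ :=
  sInf { w : ℕ | ∃ (ι : Type) (_ : Fintype ι) (T : SimpleGraph ι),
    T.IsTree ∧ ∃ D : TreeDecomp G T,
      (Finset.univ.sup fun i => (D.bag i).card) - 1 = w }

/-- A path decomposition of `G` with bags indexed by `Fin m` along a path: for each
vertex, the set of indices of bags containing it is an interval. -/
structure PathDecomp {V : Type*} (G : SimpleGraph V) (m : ℕ) where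
  bag : Fin m → Finset V
  cover : ∀ v : V, ∃ i, v ∈ bag i
  edgeCover : ∀ u v : V, G.Adj u v → ∃ i, u ∈ bag i ∧ v ∈ bag i
  interval : ∀ (v : V) (i j k : Fin m), i ≤ j → j ≤ k → v ∈ bag i → v ∈ bag k → v ∈ bag j

/-- The pathwidth of a finite graph: the minimum over all path decompositions of
(maximum bag size − 1). -/
noncomputable def pathwidth {V : Type*} [Fintype V] (G : SimpleGraph V) : ℕ :=
  sInf { w : ℕ | ∃ (m : ℕ) (D : PathDecomp G m),
    (Finset.univ.sup fun i => (D.bag i).card) - 1 = w }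

/-- The bandwidth of a finite graph: the minimum over all bijective numberings of the
vertices of the maximum stretch `|φ u − φ v|` over edges `uv`. -/
noncomputable def bandwidth {V : Type*} [Fintype V] (G : SimpleGraph V) : ℕ :=
  sInf { b : ℕ | ∃ φ : V ≃ Fin (Fintype.card V),
    ∀ u v : V, G.Adj u v → ((φ u : ℤ) - (φ v : ℤ)).natAbs ≤ b }

/-- The bipartite Kneser graph `BK(n,k)`: vertices are the `k`-subsets and the
`(n−k)`-subsets of `{1,…,n}`; a `k`-subset is adjacent to an `(n−k)`-subset containing
it (equivalently, for `2k < n`, two vertices are adjacent iff one is strictly contained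
in the other). -/
def bipartiteKneser (n k : ℕ) :
    SimpleGraph {A : Finset (Fin n) // A.card = k ∨ A.card = n - k} where
  Adj A B := A.1 ⊂ B.1 ∨ B.1 ⊂ A.1
  symm := ⟨fun A B h => h.symm⟩
  loopless := ⟨fun A h => by
    rcases h with h | h <;> exact ssubset_irrefl _ h⟩

/-!
Every edge of `BK(n,k)` joins a `k`-set to an `(n-k)`-set, so the `(n-k)`-sets form an
independent set. Put all `k`-sets in the centre bag of a star, and for each `(n-k)`-set `B`
attach a leaf bag holding `B` and its `C(n-k,k)` neighbours. Bags then have size at most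
`max (C(n,k), C(n-k,k) + 1) = C(n,k)`.
-/

open SimpleGraph Finset

lemma Nat.choose_sub_lt_choose {n k : ℕ} (hk : 0 < k) (hkn : k ≤ n) :
    (n - k).choose k < n.choose k := by
  obtain ⟨m, rfl⟩ : ∃ m, n = m + 1 := ⟨n - 1, by omega⟩
  obtain ⟨j, rfl⟩ : ∃ j, k = j + 1 := ⟨k - 1, by omega⟩
  have hle : (m + 1 - (j + 1)).choose (j + 1) ≤ m.choose (j + 1) :=
    Nat.choose_le_choose _ (by omega)
  have hpos : 0 < m.choose j := Nat.choose_pos (by omega)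
  rw [Nat.choose_succ_succ']
  omega

lemma SimpleGraph.connected_induce_starGraph {ι : Type*} {r : ι} {s : Set ι} (hr : r ∈ s) :
    ((starGraph r).induce s).Connected :=
  Connected.of_isUniversal (v := ⟨r, hr⟩) fun _ hw =>
    starGraph_center_adj fun h => hw (Subtype.ext h)

section StarDecomposition

variable {V : Type} {G : SimpleGraph V} [DecidableEq V] [Fintype V] [DecidableRel G.Adj]
  {S : Finset V}

variable (G S) in
def starBag : Option {v // v ∉ S} → Finset V
  | none => S
  | some v => insert v.1 (G.neighborFinset v.1)

lemma mem_starBag_iff_eq_some (hS : G.IsVertexCover S) {v : V} (hv : v ∉ S)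
    (i : Option {v // v ∉ S}) : v ∈ starBag G S i ↔ i = some ⟨v, hv⟩ := by
  rcases i with _ | ⟨w, hw⟩
  · simpa [starBag] using hv
  · simp only [starBag, mem_insert, mem_neighborFinset, Option.some.injEq, Subtype.mk.injEq]
    exact ⟨fun h => (h.resolve_right fun hwv => (hS hwv).elim hw hv).symm,
      fun h => .inl h.symm⟩

def starTreeDecomp (hS : G.IsVertexCover S) :
    TreeDecomp G (starGraph (none : Option {v // v ∉ S})) where
  bag := starBag G S
  cover v := if h : v ∈ S then ⟨none, h⟩ else ⟨some ⟨v, h⟩, mem_insert_self _ _⟩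
  edgeCover u v huv := by
    by_cases hu : u ∈ S
    · by_cases hv : v ∈ S
      · exact ⟨none, hu, hv⟩
      · exact ⟨some ⟨v, hv⟩, mem_insert_of_mem ((mem_neighborFinset _ _ _).2 huv.symm),
          mem_insert_self _ _⟩
    · exact ⟨some ⟨u, hu⟩, mem_insert_self _ _,
        mem_insert_of_mem ((mem_neighborFinset _ _ _).2 huv)⟩
  subtree v := by
    by_cases hv : v ∈ S
    · exact connected_induce_starGraph hv
    · have hsingle : {i | v ∈ starBag G S i} = {some ⟨v, hv⟩} :=
        Set.ext (mem_starBag_iff_eq_some hS hv)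
      rw [hsingle]
      exact Connected.of_subsingleton

lemma treewidth_le_of_isVertexCover {m : ℕ} (hS : G.IsVertexCover S) (hSm : #S ≤ m)
    (hdeg : ∀ v ∉ S, G.degree v < m) : treewidth G ≤ m - 1 := by
  have hbag : ∀ i, #(starBag G S i) ≤ m := by
    rintro (_ | ⟨v, hv⟩)
    · exact hSm
    · calc #(insert v (G.neighborFinset v)) ≤ #(G.neighborFinset v) + 1 := card_insert_le _ _
        _ = G.degree v + 1 := by rw [card_neighborFinset_eq_degree]
        _ ≤ m := hdeg v hv
  refine le_trans
    (Nat.sInf_le ⟨_, inferInstance, _, isTree_starGraph _, starTreeDecomp hS, rfl⟩)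
    (Nat.sub_le_sub_right (Finset.sup_le fun i _ => hbag i) 1)

end StarDecomposition

section BipartiteKneser

variable {n k : ℕ}

lemma bipartiteKneser_card_of_ssubset (hkn : 2 * k < n)
    {A B : {A : Finset (Fin n) // #A = k ∨ #A = n - k}} (h : A.1 ⊂ B.1) :
    #A.1 = k ∧ #B.1 = n - k := by
  have := card_lt_card h
  rcases A.2 with hA | hA <;> rcases B.2 with hB | hB <;> omega

lemma isVertexCover_bipartiteKneser (hkn : 2 * k < n) :
    (bipartiteKneser n k).IsVertexCover
      ↑(univ.filter fun A : {A : Finset (Fin n) // #A = k ∨ #A = n - k} => #A.1 = k) := by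
  rintro A B (h | h)
  · exact .inl (by simpa using (bipartiteKneser_card_of_ssubset hkn h).1)
  · exact .inr (by simpa using (bipartiteKneser_card_of_ssubset hkn h).1)

lemma card_filter_card_eq_le_choose :
    #(univ.filter fun A : {A : Finset (Fin n) // #A = k ∨ #A = n - k} => #A.1 = k) ≤
      n.choose k := by
  calc _ = #((univ.filter fun A : {A : Finset (Fin n) // #A = k ∨ #A = n - k} => #A.1 = k).map
        (Function.Embedding.subtype _)) := (card_map _).symm
    _ ≤ #(powersetCard k (univ : Finset (Fin n))) :=
        card_le_card fun _ hA => by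
          obtain ⟨A, hAk, rfl⟩ := mem_map.1 hA
          exact mem_powersetCard.2 ⟨subset_univ _, (mem_filter.1 hAk).2⟩
    _ = n.choose k := by rw [card_powersetCard, card_univ, Fintype.card_fin]

lemma bipartiteKneser_degree_le [DecidableRel (bipartiteKneser n k).Adj] (hkn : 2 * k < n)
    (B : {A : Finset (Fin n) // #A = k ∨ #A = n - k}) (hB : #B.1 ≠ k) :
    (bipartiteKneser n k).degree B ≤ (n - k).choose k := by
  calc (bipartiteKneser n k).degree B
      = #(((bipartiteKneser n k).neighborFinset B).map (Function.Embedding.subtype _)) := by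
        rw [card_map, card_neighborFinset_eq_degree]
    _ ≤ #(B.1.powersetCard k) := card_le_card fun _ hA => by
        obtain ⟨A, hAB, rfl⟩ := mem_map.1 hA
        rcases (mem_neighborFinset _ _ _).1 hAB with h | h
        · exact absurd (bipartiteKneser_card_of_ssubset hkn h).1 hB
        · exact mem_powersetCard.2 ⟨h.subset, (bipartiteKneser_card_of_ssubset hkn h).1⟩
    _ = (n - k).choose k := by rw [card_powersetCard, B.2.resolve_left hB]

end BipartiteKneser

/-- For all `k ≥ 1` and `n ≥ 2k+1`, the treewidth of the bipartite Kneser graph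
`BK(n,k)` is at most `C(n,k) − 1`. -/
theorem treewidth_bipartiteKneser_le (n k : ℕ) (hk : 1 ≤ k) (hn : 2 * k + 1 ≤ n) :
    treewidth (bipartiteKneser n k) ≤ Nat.choose n k - 1 := by
  classical
  have hkn : 2 * k < n := hn
  refine treewidth_le_of_isVertexCover (isVertexCover_bipartiteKneser hkn)
    card_filter_card_eq_le_choose fun B hB => ?_
  calc _ ≤ (n - k).choose k := bipartiteKneser_degree_le hkn B (by simpa using hB)
    _ < n.choose k := Nat.choose_sub_lt_choose hk (by omega)
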